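/- Eliminating guarded quantification using the cloud operator: for every Frame Logic model M, mutable function f ∈ F_m, variable x, and FL formula φ(y), (i) M ⊨ ∃y: y = f(x). φ if and only if M ⊨ (f(x) = f(x)) ∧ φ([f(x)]), where φ([f(x)]) is φ with the cloud term [f(x)] substituted for y; and (ii) ⟦Sp(∃y: y = f(x). φ)⟧_M = ⟦Sp((f(x) = f(x)) ∧ φ([f(x)]))⟧_M. -/
import Mathlib


/-!
# Frame Logic: syntax and semantics

First-order logic with recursive definitions over an uninterpreted foreground sort
`Loc`, the background sort `Set Loc` of sets of locations, a family of mutable unary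
functions (pointer fields, indexed by naturals), non-mutable unary functions,
constants, binary relations, and (unary) recursively defined predicates interpreted as
least fixpoints.  The syntax has the support operator `Sp(·)` (on formulas and on
terms), the cloud operator `[·]`, guarded existential quantification
`∃y : y = f(t). φ`, `ite` on guards, and universal quantification over locations
(used by the verification conditions' frame formulas).
-/

namespace FL

mutual
/-- Terms of the foreground sort `Loc`. -/
inductive LTm : Type where
  | var (n : ℕ)
  | cnst (c : ℕ)
  | mut (f : ℕ) (t : LTm)       -- application of a mutable function (pointer field)
  | fn (g : ℕ) (t : LTm)        -- application of a non-mutable function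
  | lIte (γ : Fml) (t₁ t₂ : LTm)
  | cloudL (t : LTm)            -- the cloud operator on terms

/-- Terms of the background sort `Set Loc`. -/
inductive STm : Type where
  | svar (n : ℕ)
  | empty
  | sing (t : LTm)
  | union (s₁ s₂ : STm)
  | inter (s₁ s₂ : STm)
  | diff (s₁ s₂ : STm)
  | spF (φ : Fml)               -- the support of a formula
  | spL (t : LTm)               -- the support of a location term
  | cloudS (s : STm)            -- the cloud operator on set terms

/-- Formulas. -/
inductive Fml : Type where
  | tt
  | ff
  | eqL (t₁ t₂ : LTm)
  | eqS (s₁ s₂ : STm)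
  | sub (s₁ s₂ : STm)
  | mem (t : LTm) (s : STm)
  | rel (r : ℕ) (t₁ t₂ : LTm)
  | recP (I : ℕ) (t : LTm)      -- recursively defined (unary) predicate
  | not (φ : Fml)
  | and (φ ψ : Fml)
  | or (φ ψ : Fml)
  | imp (φ ψ : Fml)
  | fIte (γ φ ψ : Fml)
  | exG (y : ℕ) (f : ℕ) (t : LTm) (φ : Fml)  -- guarded quantification ∃y : y = f(t). φ
  | allL (n : ℕ) (φ : Fml)      -- ∀ (n : Loc). φ  (used by frame formulas)
  | cloud (φ : Fml)             -- the cloud operator on formulas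
end

open scoped Classical

variable {Loc : Type}

section Semantics

variable (mutI : ℕ → Loc → Loc) (fnI : ℕ → Loc → Loc) (cI : ℕ → Loc)
  (relI : ℕ → Loc → Loc → Prop)
  (J : ℕ → Loc → Prop)          -- interpretation of the recursive predicates
  (E : ℕ → Loc → Set Loc)       -- supports of the recursive predicates

mutual
/-- Value of a location term. -/
noncomputable def evalL : LTm → (ℕ → Loc) → (ℕ → Set Loc) → Loc
  | .var n, v, _ => v n
  | .cnst c, _, _ => cI c
  | .mut f t, v, w => mutI f (evalL t v w)
  | .fn g t, v, w => fnI g (evalL t v w)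
  | .lIte γ t₁ t₂, v, w =>
      if satF γ v w then evalL t₁ v w else evalL t₂ v w
  | .cloudL t, v, w => evalL t v w

/-- Value of a set term. -/
noncomputable def evalS : STm → (ℕ → Loc) → (ℕ → Set Loc) → Set Loc
  | .svar n, _, w => w n
  | .empty, _, _ => ∅
  | .sing t, v, w => {evalL t v w}
  | .union s₁ s₂, v, w => evalS s₁ v w ∪ evalS s₂ v w
  | .inter s₁ s₂, v, w => evalS s₁ v w ∩ evalS s₂ v w
  | .diff s₁ s₂, v, w => evalS s₁ v w \ evalS s₂ v w
  | .spF φ, v, w => spF φ v w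
  | .spL t, v, w => spL t v w
  | .cloudS s, v, w => evalS s v w

/-- Truth of a formula. -/
noncomputable def satF : Fml → (ℕ → Loc) → (ℕ → Set Loc) → Prop
  | .tt, _, _ => True
  | .ff, _, _ => False
  | .eqL t₁ t₂, v, w => evalL t₁ v w = evalL t₂ v w
  | .eqS s₁ s₂, v, w => evalS s₁ v w = evalS s₂ v w
  | .sub s₁ s₂, v, w => evalS s₁ v w ⊆ evalS s₂ v w
  | .mem t s, v, w => evalL t v w ∈ evalS s v w
  | .rel r t₁ t₂, v, w => relI r (evalL t₁ v w) (evalL t₂ v w)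
  | .recP I t, v, w => J I (evalL t v w)
  | .not φ, v, w => ¬ satF φ v w
  | .and φ ψ, v, w => satF φ v w ∧ satF ψ v w
  | .or φ ψ, v, w => satF φ v w ∨ satF ψ v w
  | .imp φ ψ, v, w => satF φ v w → satF ψ v w
  | .fIte γ φ ψ, v, w =>
      (satF γ v w ∧ satF φ v w) ∨ (¬ satF γ v w ∧ satF ψ v w)
  | .exG y f t φ, v, w => satF φ (Function.update v y (mutI f (evalL t v w))) w
  | .allL n φ, v, w => ∀ d : Loc, satF φ (Function.update v n d) w
  | .cloud φ, v, w => satF φ v w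

/-- Support of a location term. -/
noncomputable def spL : LTm → (ℕ → Loc) → (ℕ → Set Loc) → Set Loc
  | .var _, _, _ => ∅
  | .cnst _, _, _ => ∅
  | .mut _ t, v, w => {evalL t v w} ∪ spL t v w
  | .fn _ t, v, w => spL t v w
  | .lIte γ t₁ t₂, v, w =>
      spF γ v w ∪ if satF γ v w then spL t₁ v w else spL t₂ v w
  | .cloudL _, _, _ => ∅

/-- Support of a set term. -/
noncomputable def spS : STm → (ℕ → Loc) → (ℕ → Set Loc) → Set Loc
  | .svar _, _, _ => ∅
  | .empty, _, _ => ∅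
  | .sing t, v, w => spL t v w
  | .union s₁ s₂, v, w => spS s₁ v w ∪ spS s₂ v w
  | .inter s₁ s₂, v, w => spS s₁ v w ∪ spS s₂ v w
  | .diff s₁ s₂, v, w => spS s₁ v w ∪ spS s₂ v w
  | .spF φ, v, w => spF φ v w
  | .spL t, v, w => spL t v w
  | .cloudS _, _, _ => ∅

/-- Support of a formula. -/
noncomputable def spF : Fml → (ℕ → Loc) → (ℕ → Set Loc) → Set Loc
  | .tt, _, _ => ∅
  | .ff, _, _ => ∅
  | .eqL t₁ t₂, v, w => spL t₁ v w ∪ spL t₂ v w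
  | .eqS s₁ s₂, v, w => spS s₁ v w ∪ spS s₂ v w
  | .sub s₁ s₂, v, w => spS s₁ v w ∪ spS s₂ v w
  | .mem t s, v, w => spL t v w ∪ spS s v w
  | .rel _ t₁ t₂, v, w => spL t₁ v w ∪ spL t₂ v w
  | .recP I t, v, w => E I (evalL t v w) ∪ spL t v w
  | .not φ, v, w => spF φ v w
  | .and φ ψ, v, w => spF φ v w ∪ spF ψ v w
  | .or φ ψ, v, w => spF φ v w ∪ spF ψ v w
  | .imp φ ψ, v, w => spF φ v w ∪ spF ψ v w
  | .fIte γ φ ψ, v, w =>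
      spF γ v w ∪ if satF γ v w then spF φ v w else spF ψ v w
  | .exG y f t φ, v, w =>
      {evalL t v w} ∪ spL t v w ∪ spF φ (Function.update v y (mutI f (evalL t v w))) w
  | .allL _ _, _, _ => ∅
  | .cloud _, _, _ => ∅
end

end Semantics

/-- A set of recursive definitions: the recursive predicate `I` has formal parameter
`param I` (a variable) and body `body I` (in which recursive predicates occur only
positively or inside support expressions, and whose only free variable is the
parameter). -/
structure DefEnv : Type where
  param : ℕ → ℕ
  body : ℕ → Fml

section Lfp

variable (mutI : ℕ → Loc → Loc) (fnI : ℕ → Loc → Loc) (cI : ℕ → Loc)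
  (relI : ℕ → Loc → Loc → Prop) (D : DefEnv)

/-- The operator on (truth, support) environments for the recursive definitions whose
least fixpoint interprets the recursive predicates and their supports. -/
noncomputable def defStep :
    (ℕ → Loc → Prop) × (ℕ → Loc → Set Loc) → (ℕ → Loc → Prop) × (ℕ → Loc → Set Loc) :=
  fun JE =>
    (fun I l => satF mutI fnI cI relI JE.1 JE.2 (D.body I)
        (Function.update (fun _ => l) (D.param I) l) (fun _ => ∅),
     fun I l => spF mutI fnI cI relI JE.1 JE.2 (D.body I)
        (Function.update (fun _ => l) (D.param I) l) (fun _ => ∅))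

/-- The least (truth, support) environment closed under the recursive definitions:
the least-fixpoint interpretation of the recursive predicates and, simultaneously, the
least solution of the support equations. -/
noncomputable def lfpEnv :
    (ℕ → Loc → Prop) × (ℕ → Loc → Set Loc) :=
  sInf {JE | defStep mutI fnI cI relI D JE ≤ JE}

end Lfp

end FL

namespace FL

/-! ## Substitution of a location term for a variable -/

mutual
/-- Substitution in location terms. -/
def substL (n : ℕ) (u : LTm) : LTm → LTm
  | .var m => if m = n then u else .var m
  | .cnst c => .cnst c
  | .mut f t => .mut f (substL n u t)
  | .fn g t => .fn g (substL n u t)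
  | .lIte γ t₁ t₂ => .lIte (substF n u γ) (substL n u t₁) (substL n u t₂)
  | .cloudL t => .cloudL (substL n u t)

/-- Substitution in set terms. -/
def substS (n : ℕ) (u : LTm) : STm → STm
  | .svar m => .svar m
  | .empty => .empty
  | .sing t => .sing (substL n u t)
  | .union s₁ s₂ => .union (substS n u s₁) (substS n u s₂)
  | .inter s₁ s₂ => .inter (substS n u s₁) (substS n u s₂)
  | .diff s₁ s₂ => .diff (substS n u s₁) (substS n u s₂)
  | .spF φ => .spF (substF n u φ)
  | .spL t => .spL (substL n u t)
  | .cloudS s => .cloudS (substS n u s)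

/-- Substitution in formulas (stopping under binders of the substituted variable). -/
def substF (n : ℕ) (u : LTm) : Fml → Fml
  | .tt => .tt
  | .ff => .ff
  | .eqL t₁ t₂ => .eqL (substL n u t₁) (substL n u t₂)
  | .eqS s₁ s₂ => .eqS (substS n u s₁) (substS n u s₂)
  | .sub s₁ s₂ => .sub (substS n u s₁) (substS n u s₂)
  | .mem t s => .mem (substL n u t) (substS n u s)
  | .rel r t₁ t₂ => .rel r (substL n u t₁) (substL n u t₂)
  | .recP I t => .recP I (substL n u t)
  | .not φ => .not (substF n u φ)
  | .and φ ψ => .and (substF n u φ) (substF n u ψ)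
  | .or φ ψ => .or (substF n u φ) (substF n u ψ)
  | .imp φ ψ => .imp (substF n u φ) (substF n u ψ)
  | .fIte γ φ ψ => .fIte (substF n u γ) (substF n u φ) (substF n u ψ)
  | .exG y f t φ => .exG y f (substL n u t) (if y = n then φ else substF n u φ)
  | .allL m φ => .allL m (if m = n then φ else substF n u φ)
  | .cloud φ => .cloud (substF n u φ)
end

/-! ## "Not bound" (freshness of a variable with respect to binders) -/

mutual
/-- The variable `x` is not bound anywhere in a location term. -/
def nbL (x : ℕ) : LTm → Prop
  | .var _ => True
  | .cnst _ => True
  | .mut _ t => nbL x t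
  | .fn _ t => nbL x t
  | .lIte γ t₁ t₂ => nbF x γ ∧ nbL x t₁ ∧ nbL x t₂
  | .cloudL t => nbL x t

/-- The variable `x` is not bound anywhere in a set term. -/
def nbS (x : ℕ) : STm → Prop
  | .svar _ => True
  | .empty => True
  | .sing t => nbL x t
  | .union s₁ s₂ => nbS x s₁ ∧ nbS x s₂
  | .inter s₁ s₂ => nbS x s₁ ∧ nbS x s₂
  | .diff s₁ s₂ => nbS x s₁ ∧ nbS x s₂
  | .spF φ => nbF x φ
  | .spL t => nbL x t
  | .cloudS s => nbS x s

/-- The variable `x` is not bound anywhere in a formula. -/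
def nbF (x : ℕ) : Fml → Prop
  | .tt => True
  | .ff => True
  | .eqL t₁ t₂ => nbL x t₁ ∧ nbL x t₂
  | .eqS s₁ s₂ => nbS x s₁ ∧ nbS x s₂
  | .sub s₁ s₂ => nbS x s₁ ∧ nbS x s₂
  | .mem t s => nbL x t ∧ nbS x s
  | .rel _ t₁ t₂ => nbL x t₁ ∧ nbL x t₂
  | .recP _ t => nbL x t
  | .not φ => nbF x φ
  | .and φ ψ => nbF x φ ∧ nbF x ψ
  | .or φ ψ => nbF x φ ∧ nbF x ψ
  | .imp φ ψ => nbF x φ ∧ nbF x ψ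
  | .fIte γ φ ψ => nbF x γ ∧ nbF x φ ∧ nbF x ψ
  | .exG y _ t φ => y ≠ x ∧ nbL x t ∧ nbF x φ
  | .allL m φ => m ≠ x ∧ nbF x φ
  | .cloud φ => nbF x φ
end

end FL

namespace FL
section Key

variable {Loc : Type} (mutI fnI : ℕ → Loc → Loc) (cI : ℕ → Loc)
  (relI : ℕ → Loc → Loc → Prop) (J : ℕ → Loc → Prop) (E : ℕ → Loc → Set Loc)
  (f x y : ℕ)

mutual

theorem keyL : ∀ (t : LTm) (v : ℕ → Loc) (w : ℕ → Set Loc), nbL x t →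
    evalL mutI fnI cI relI J E (substL y (LTm.cloudL (LTm.mut f (LTm.var x))) t) v w
      = evalL mutI fnI cI relI J E t (Function.update v y (mutI f (v x))) w
    ∧ spL mutI fnI cI relI J E (substL y (LTm.cloudL (LTm.mut f (LTm.var x))) t) v w
      = spL mutI fnI cI relI J E t (Function.update v y (mutI f (v x))) w
  | .var n, v, w, _ => by
      by_cases hn : n = y <;>
        simp [substL, evalL, spL, hn, Function.update_apply]
  | .cnst c, v, w, _ => by simp [substL, evalL, spL]
  | .mut g t, v, w, h => by
      have ih := keyL t v w h
      simp [substL, evalL, spL, ih.1, ih.2]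
  | .fn g t, v, w, h => by
      have ih := keyL t v w h
      simp [substL, evalL, spL, ih.1, ih.2]
  | .lIte γ t₁ t₂, v, w, h => by
      have ihγ := keyF γ v w h.1
      have ih₁ := keyL t₁ v w h.2.1
      have ih₂ := keyL t₂ v w h.2.2
      by_cases hc : satF mutI fnI cI relI J E γ (Function.update v y (mutI f (v x))) w <;>
        simp [substL, evalL, spL, ihγ.1, ihγ.2, ih₁.1, ih₁.2, ih₂.1, ih₂.2, hc]
  | .cloudL t, v, w, h => by
      have ih := keyL t v w h
      simp [substL, evalL, spL, ih.1]

theorem keyS : ∀ (s : STm) (v : ℕ → Loc) (w : ℕ → Set Loc), nbS x s →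
    evalS mutI fnI cI relI J E (substS y (LTm.cloudL (LTm.mut f (LTm.var x))) s) v w
      = evalS mutI fnI cI relI J E s (Function.update v y (mutI f (v x))) w
    ∧ spS mutI fnI cI relI J E (substS y (LTm.cloudL (LTm.mut f (LTm.var x))) s) v w
      = spS mutI fnI cI relI J E s (Function.update v y (mutI f (v x))) w
  | .svar n, v, w, _ => by simp [substS, evalS, spS]
  | .empty, v, w, _ => by simp [substS, evalS, spS]
  | .sing t, v, w, h => by
      have ih := keyL t v w h
      simp [substS, evalS, spS, ih.1, ih.2]
  | .union s₁ s₂, v, w, h => by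
      have ih₁ := keyS s₁ v w h.1
      have ih₂ := keyS s₂ v w h.2
      simp [substS, evalS, spS, ih₁.1, ih₁.2, ih₂.1, ih₂.2]
  | .inter s₁ s₂, v, w, h => by
      have ih₁ := keyS s₁ v w h.1
      have ih₂ := keyS s₂ v w h.2
      simp [substS, evalS, spS, ih₁.1, ih₁.2, ih₂.1, ih₂.2]
  | .diff s₁ s₂, v, w, h => by
      have ih₁ := keyS s₁ v w h.1
      have ih₂ := keyS s₂ v w h.2
      simp [substS, evalS, spS, ih₁.1, ih₁.2, ih₂.1, ih₂.2]
  | .spF φ, v, w, h => by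
      have ih := keyF φ v w h
      simp [substS, evalS, spS, ih.2]
  | .spL t, v, w, h => by
      have ih := keyL t v w h
      simp [substS, evalS, spS, ih.2]
  | .cloudS s, v, w, h => by
      have ih := keyS s v w h
      simp [substS, evalS, spS, ih.1]

theorem keyF : ∀ (φ : Fml) (v : ℕ → Loc) (w : ℕ → Set Loc), nbF x φ →
    (satF mutI fnI cI relI J E (substF y (LTm.cloudL (LTm.mut f (LTm.var x))) φ) v w
      ↔ satF mutI fnI cI relI J E φ (Function.update v y (mutI f (v x))) w)
    ∧ spF mutI fnI cI relI J E (substF y (LTm.cloudL (LTm.mut f (LTm.var x))) φ) v w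
      = spF mutI fnI cI relI J E φ (Function.update v y (mutI f (v x))) w
  | .tt, v, w, _ => by simp [substF, satF, spF]
  | .ff, v, w, _ => by simp [substF, satF, spF]
  | .eqL t₁ t₂, v, w, h => by
      have ih₁ := keyL t₁ v w h.1
      have ih₂ := keyL t₂ v w h.2
      simp [substF, satF, spF, ih₁.1, ih₁.2, ih₂.1, ih₂.2]
  | .eqS s₁ s₂, v, w, h => by
      have ih₁ := keyS s₁ v w h.1
      have ih₂ := keyS s₂ v w h.2
      simp [substF, satF, spF, ih₁.1, ih₁.2, ih₂.1, ih₂.2]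
  | .sub s₁ s₂, v, w, h => by
      have ih₁ := keyS s₁ v w h.1
      have ih₂ := keyS s₂ v w h.2
      simp [substF, satF, spF, ih₁.1, ih₁.2, ih₂.1, ih₂.2]
  | .mem t s, v, w, h => by
      have ih₁ := keyL t v w h.1
      have ih₂ := keyS s v w h.2
      simp [substF, satF, spF, ih₁.1, ih₁.2, ih₂.1, ih₂.2]
  | .rel r t₁ t₂, v, w, h => by
      have ih₁ := keyL t₁ v w h.1
      have ih₂ := keyL t₂ v w h.2
      simp [substF, satF, spF, ih₁.1, ih₁.2, ih₂.1, ih₂.2]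
  | .recP I t, v, w, h => by
      have ih := keyL t v w h
      simp [substF, satF, spF, ih.1, ih.2]
  | .not φ, v, w, h => by
      have ih := keyF φ v w h
      simp [substF, satF, spF, ih.1, ih.2]
  | .and φ ψ, v, w, h => by
      have ih₁ := keyF φ v w h.1
      have ih₂ := keyF ψ v w h.2
      simp [substF, satF, spF, ih₁.1, ih₁.2, ih₂.1, ih₂.2]
  | .or φ ψ, v, w, h => by
      have ih₁ := keyF φ v w h.1
      have ih₂ := keyF ψ v w h.2
      simp [substF, satF, spF, ih₁.1, ih₁.2, ih₂.1, ih₂.2]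
  | .imp φ ψ, v, w, h => by
      have ih₁ := keyF φ v w h.1
      have ih₂ := keyF ψ v w h.2
      simp [substF, satF, spF, ih₁.1, ih₁.2, ih₂.1, ih₂.2]
  | .fIte γ φ ψ, v, w, h => by
      have ihγ := keyF γ v w h.1
      have ih₁ := keyF φ v w h.2.1
      have ih₂ := keyF ψ v w h.2.2
      by_cases hc : satF mutI fnI cI relI J E γ (Function.update v y (mutI f (v x))) w <;>
        simp [substF, satF, spF, ihγ.1, ihγ.2, ih₁.1, ih₁.2, ih₂.1, ih₂.2, hc]
  | .exG z g t φ, v, w, h => by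
      obtain ⟨hzx, ht, hφ⟩ := h
      have iht := keyL t v w ht
      by_cases hzy : z = y
      · have hupd : ∀ c : Loc,
            Function.update (Function.update v y (mutI f (v x))) z c
              = Function.update v z c := by
          intro c; rw [hzy, Function.update_idem]
        simp only [substF, satF, spF, if_pos hzy, iht.1, iht.2, hupd]
        first
        | exact ⟨Iff.rfl, rfl⟩
        | exact ⟨Iff.rfl, trivial⟩
        | exact ⟨trivial, trivial⟩
        | simp
      · have hx' : ∀ c : Loc, Function.update v z c x = v x := by
          intro c; simp [Function.update_apply, Ne.symm hzx]
        have hcomm : ∀ c : Loc,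
            Function.update (Function.update v z c) y (mutI f (v x))
              = Function.update (Function.update v y (mutI f (v x))) z c := by
          intro c; exact Function.update_comm hzy _ _ _
        have ihφ : ∀ c : Loc,
            (satF mutI fnI cI relI J E
                (substF y (LTm.cloudL (LTm.mut f (LTm.var x))) φ)
                (Function.update v z c) w
              ↔ satF mutI fnI cI relI J E φ
                (Function.update (Function.update v y (mutI f (v x))) z c) w)
            ∧ spF mutI fnI cI relI J E
                (substF y (LTm.cloudL (LTm.mut f (LTm.var x))) φ)
                (Function.update v z c) w
              = spF mutI fnI cI relI J E φ
                (Function.update (Function.update v y (mutI f (v x))) z c) w := by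
          intro c
          have := keyF φ (Function.update v z c) w hφ
          rw [hx' c, hcomm c] at this
          exact this
        simp only [substF, satF, spF, if_neg hzy, iht.1, iht.2,
          (ihφ _).1, (ihφ _).2]
        first
        | exact ⟨Iff.rfl, rfl⟩
        | exact ⟨Iff.rfl, trivial⟩
        | exact ⟨trivial, trivial⟩
        | simp
  | .allL z φ, v, w, h => by
      obtain ⟨hzx, hφ⟩ := h
      by_cases hzy : z = y
      · have hupd : ∀ c : Loc,
            Function.update (Function.update v y (mutI f (v x))) z c
              = Function.update v z c := by
          intro c; rw [hzy, Function.update_idem]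
        simp only [substF, satF, spF, if_pos hzy, hupd]
        first
        | exact ⟨Iff.rfl, rfl⟩
        | exact ⟨Iff.rfl, trivial⟩
        | exact ⟨trivial, trivial⟩
        | simp
      · have hx' : ∀ c : Loc, Function.update v z c x = v x := by
          intro c; simp [Function.update_apply, Ne.symm hzx]
        have hcomm : ∀ c : Loc,
            Function.update (Function.update v z c) y (mutI f (v x))
              = Function.update (Function.update v y (mutI f (v x))) z c := by
          intro c; exact Function.update_comm hzy _ _ _
        have ihφ : ∀ c : Loc,
            satF mutI fnI cI relI J E
                (substF y (LTm.cloudL (LTm.mut f (LTm.var x))) φ)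
                (Function.update v z c) w
              ↔ satF mutI fnI cI relI J E φ
                (Function.update (Function.update v y (mutI f (v x))) z c) w := by
          intro c
          have := keyF φ (Function.update v z c) w hφ
          rw [hx' c, hcomm c] at this
          exact this.1
        simp only [substF, satF, spF, if_neg hzy]
        exact ⟨forall_congr' ihφ, trivial⟩
  | .cloud φ, v, w, h => by
      have ih := keyF φ v w h
      simp [substF, satF, spF, ih.1]

end

end Key
end FL

open FL in
/-- Eliminating guarded quantification using the cloud operator: for
every Frame Logic model `M` (a nonempty foreground universe `Loc`, interpretations
`mutI`, `fnI`, `cI`, `relI` of the mutable functions, non-mutable functions, constants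
and relations, recursive definitions `D` interpreted — together with their supports —
by the least fixpoint, and valuations `v`, `w`), every mutable function `f`, variable
`x`, and FL formula `φ` (in which the variable `x` is not re-bound, so that the
substitution is capture-free):

(i) `M ⊨ ∃y : y = f(x). φ` iff `M ⊨ (f(x) = f(x)) ∧ φ([f(x)])`, where `φ([f(x)])` is
`φ` with the cloud term `[f(x)]` substituted for `y`; and

(ii) `⟦Sp(∃y : y = f(x). φ)⟧_M = ⟦Sp((f(x) = f(x)) ∧ φ([f(x)]))⟧_M`. -/
theorem cloud_eliminates_guarded_quantification
    {Loc : Type} [Nonempty Loc]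
    (mutI : ℕ → Loc → Loc) (fnI : ℕ → Loc → Loc) (cI : ℕ → Loc)
    (relI : ℕ → Loc → Loc → Prop) (D : DefEnv)
    (f x y : ℕ) (φ : Fml) (hx : nbF x φ)
    (v : ℕ → Loc) (w : ℕ → Set Loc) :
    letI J := (lfpEnv mutI fnI cI relI D).1
    letI E := (lfpEnv mutI fnI cI relI D).2
    letI lhs : Fml := .exG y f (.var x) φ
    letI rhs : Fml :=
      .and (.eqL (.mut f (.var x)) (.mut f (.var x)))
        (substF y (.cloudL (.mut f (.var x))) φ)
    (satF mutI fnI cI relI J E lhs v w ↔ satF mutI fnI cI relI J E rhs v w) ∧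
      spF mutI fnI cI relI J E lhs v w = spF mutI fnI cI relI J E rhs v w := by
  have key := keyF mutI fnI cI relI (lfpEnv mutI fnI cI relI D).1 (lfpEnv mutI fnI cI relI D).2 f x y φ v w hx
  refine ⟨?_, ?_⟩
  · simpa [satF, evalL] using key.1.symm
  · simp only [spF, spL, evalL, key.2]
    ext l
    simp
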